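/- Let 𝐏⃗ be a finite collection of multi-tiles of rank 1, let f₁,…,fₙ be functions, and let T ⊆ 𝐏⃗ be a tree with top P⃗_T. Then Σ_{P⃗∈T} |I_{P⃗}| ∏_{i=1}^{n} ‖fᵢ‖_{P_i} ≤ C·|I_T| · sup_{1≤i₁<i₂≤n} [ size_{i₁}(T) · size_{i₂}(T) · ∏_{i≠i₁,i₂} ‖fᵢ‖_{T,i} ], with C depending only on n and the fixed tile constants. -/

import Mathlib

open MeasureTheory Real Complex
open scoped FourierTransform ENNReal NNReal Classical
noncomputable section

structure Iv where
  l : ℝ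
  len : ℝ

def Iv.set (I : Iv) : Set ℝ := Set.Ioo I.l (I.l + I.len)

def Iv.dil (c : ℝ) (I : Iv) : Set ℝ :=
  Set.Ioo (I.l + I.len / 2 - c * I.len / 2) (I.l + I.len / 2 + c * I.len / 2)

def Iv.chi (I : Iv) (x : ℝ) : ℝ := (1 + Metric.infDist x I.set / I.len)⁻¹

structure Tile where
  j : ℤ
  kt : ℤ
  kf : ℤ

def Tile.timeIv (P : Tile) : Iv := ⟨(2:ℝ)^P.j * P.kt, (2:ℝ)^P.j⟩

def Tile.freqIv (β : ℝ) (P : Tile) : Iv :=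
  ⟨(2:ℝ)^(-P.j) * ((P.kf : ℝ) + (-1:ℝ)^(-P.j) * β), (2:ℝ)^(-P.j)⟩

def Tile.lt' (β : ℝ) (P' P : Tile) : Prop :=
  (P'.timeIv).set ⊂ (P.timeIv).set ∧ (P.freqIv β).set ⊆ (P'.freqIv β).dil 3

def Tile.le' (β : ℝ) (P' P : Tile) : Prop := Tile.lt' β P' P ∨ P' = P

def Tile.lesim (β c : ℝ) (P' P : Tile) : Prop :=
  (P'.timeIv).set ⊆ (P.timeIv).set ∧ (P.freqIv β).set ⊆ (P'.freqIv β).dil c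

def Tile.lesim' (β c : ℝ) (P' P : Tile) : Prop :=
  Tile.lesim β c P' P ∧ ¬ Tile.le' β P' P

structure MultiTile (n : ℕ) where
  j : ℤ
  kt : ℤ
  kf : Fin n → ℤ

def MultiTile.tile {n : ℕ} (P : MultiTile n) (i : Fin n) : Tile := ⟨P.j, P.kt, P.kf i⟩

def MultiTile.timeIv {n : ℕ} (P : MultiTile n) : Iv := ⟨(2:ℝ)^P.j * P.kt, (2:ℝ)^P.j⟩

def MultiTile.freqCube {n : ℕ} (α : Fin n → ℝ) (P : MultiTile n) : Set (Fin n → ℝ) :=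
  {ξ | ∀ i, ξ i ∈ ((P.tile i).freqIv (α i)).set}

def HasRank (n k : ℕ) (α : Fin n → ℝ) (c₃ csmall : ℝ) (Ps : Finset (MultiTile n)) : Prop :=
  ∀ P ∈ Ps, ∀ P' ∈ Ps, ∀ ι : Fin k → Fin n, StrictMono ι →
    (∀ s, Tile.le' (α (ι s)) (MultiTile.tile P' (ι s)) (MultiTile.tile P (ι s))) →
    (∀ i, Tile.lesim (α i) c₃ (MultiTile.tile P' i) (MultiTile.tile P i)) ∧
    ((2:ℝ)^P'.j ≤ csmall * (2:ℝ)^P.j →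
      ∃ i i' : Fin n, i ≠ i' ∧ Tile.lesim' (α i) c₃ (MultiTile.tile P' i) (MultiTile.tile P i) ∧
        Tile.lesim' (α i') c₃ (MultiTile.tile P' i') (MultiTile.tile P i'))

def AdaptedBump (w : Iv) (Ca : ℕ → ℝ) (M : ℕ) (ψ : ℝ → ℂ) : Prop :=
  ContDiff ℝ (⊤ : ℕ∞) ψ ∧ (∀ ξ, ξ ∉ w.set → ψ ξ = 0) ∧ (∀ ξ ∈ w.dil (9/10), ψ ξ = 1) ∧
  ∀ a : ℕ, a ≤ M → ∀ ξ : ℝ, ‖iteratedDeriv a ψ ξ‖ ≤ Ca a / w.len ^ a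

def mulOp (ψ : ℝ → ℂ) (f : ℝ → ℂ) (x : ℝ) : ℂ :=
  ∫ ξ : ℝ, ψ ξ * 𝓕 f ξ * Complex.exp (2 * Real.pi * Complex.I * ξ * x)

def tileNorm (N : ℕ) (ψ : ℝ → ℂ) (P : Tile) (f : ℝ → ℂ) : ℝ :=
  ((2:ℝ)^P.j)⁻¹ * ∫ x : ℝ, ‖mulOp ψ f x‖ * (P.timeIv).chi x ^ (2*N)

def IsTree (n : ℕ) (α : Fin n → ℝ) (Ps T : Finset (MultiTile n)) (PT : MultiTile n)
    (jdx : Fin n) : Prop :=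
  PT ∈ Ps ∧ T ⊆ Ps ∧ ∀ P ∈ T, Tile.le' (α jdx) (MultiTile.tile P jdx) (MultiTile.tile PT jdx)

def treeNorm (n N : ℕ) (ψ : Fin n → Tile → ℝ → ℂ) (i : Fin n) (f : ℝ → ℂ)
    (T : Finset (MultiTile n)) : ℝ :=
  ⨆ P ∈ T, tileNorm N (ψ i (MultiTile.tile P i)) (MultiTile.tile P i) f

def treeSize (n N : ℕ) (α : Fin n → ℝ) (c₃ : ℝ) (ψ : Fin n → Tile → ℝ → ℂ)
    (i : Fin n) (f : ℝ → ℂ) (T : Finset (MultiTile n)) (PT : MultiTile n) : ℝ :=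
  Real.sqrt (((2:ℝ)^PT.j)⁻¹ * ∑ P ∈ T,
      if Tile.lesim' (α i) c₃ (MultiTile.tile P i) (MultiTile.tile PT i)
      then (2:ℝ)^P.j * tileNorm N (ψ i (MultiTile.tile P i)) (MultiTile.tile P i) f ^ 2 else 0)
    + treeNorm n N ψ i f T

def StronglyDisjoint (n : ℕ) (α : Fin n → ℝ) (i : Fin n)
    (T : Finset (MultiTile n)) (PT : MultiTile n)
    (T' : Finset (MultiTile n)) (PT' : MultiTile n) : Prop :=
  (∀ P ∈ T, ∀ P' ∈ T', MultiTile.tile P i ≠ MultiTile.tile P' i) ∧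
  (∀ P ∈ T, ∀ P' ∈ T',
    ((MultiTile.tile P i).freqIv (α i)).set ⊂ ((MultiTile.tile P' i).freqIv (α i)).set →
    (MultiTile.timeIv P').set ∩ (MultiTile.timeIv PT).set = ∅) ∧
  (∀ P ∈ T, ∀ P' ∈ T',
    ((MultiTile.tile P' i).freqIv (α i)).set ⊂ ((MultiTile.tile P i).freqIv (α i)).set →
    (MultiTile.timeIv P).set ∩ (MultiTile.timeIv PT').set = ∅)

def setDist {E : Type*} [PseudoMetricSpace E] (s t : Set E) : ℝ :=
  ⨅ x ∈ s, Metric.infDist x t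

/-!
Since the tree sits in a rank-one collection, every tile of `T` lies below the top in all
components. Tiles with `|I_P| > csmall |I_T|` live on boundedly many scales, and on each scale
the inclusions `I_P ⊆ I_T` and `w_{PT,i} ⊆ c₃ w_{P,i}` leave boundedly many positions, so their
total contribution is a constant times `|I_T|` times any single term of the supremum. Every
smaller tile is strictly below the top (`≲′`) in two components `i₁ < i₂`; grouping those tiles
by the pair and applying Cauchy–Schwarz in these two components bounds each group by
`|I_T| size_{i₁}(T) size_{i₂}(T) ∏ ‖f_i‖_{T,i}`, the other factors being bounded by their
suprema over the tree.
-/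

lemma le_ciSup_finset {ι : Type*} (s : Finset ι) (g : ι → ℝ) {i : ι} (hi : i ∈ s) :
    g i ≤ ⨆ j ∈ s, g j :=
  le_ciSup₂ (f := fun j (_ : j ∈ s) => g j)
    ((s.finite_toSet.image g).bddAbove.mono <|
      Set.iUnion_subset fun _ => Set.range_subset_iff.2 fun hj => Set.mem_image_of_mem g hj) i hi

lemma le_ciSup_of_lt {ι : Type*} [Finite ι] [LT ι] (g : ι → ι → ℝ) {i₁ i₂ : ι} (h : i₁ < i₂) :
    g i₁ i₂ ≤ ⨆ (j₁ : ι) (j₂ : ι) (_ : j₁ < j₂), g j₁ j₂ :=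
  le_ciSup_of_le (Set.finite_range _).bddAbove i₁ <|
    le_ciSup_of_le (Set.finite_range _).bddAbove i₂ (ciSup_pos (f := fun _ => g i₁ i₂) h).ge

lemma Finset.prod_eq_mul_mul_prod_filter_ne {ι M : Type*} [Fintype ι] [DecidableEq ι]
    [CommMonoid M] (g : ι → M) {i₁ i₂ : ι} (h : i₁ ≠ i₂) :
    ∏ i, g i = g i₁ * (g i₂ * ∏ i ∈ univ.filter (fun i => i ≠ i₁ ∧ i ≠ i₂), g i) := by
  have : univ.filter (fun i => i ≠ i₁ ∧ i ≠ i₂) = (univ.erase i₁).erase i₂ := by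
    ext i; simp [and_comm]
  rw [this, mul_prod_erase _ _ (mem_erase.2 ⟨h.symm, mem_univ _⟩), mul_prod_erase _ _ (mem_univ _)]

lemma Finset.sum_le_sum_sum_filter_of_forall_exists {α β : Type*} {s : Finset α} {t : Finset β}
    {f : α → ℝ} {p : β → α → Prop} [∀ b, DecidablePred (p b)] (hf : ∀ a ∈ s, 0 ≤ f a)
    (hcover : ∀ a ∈ s, ∃ b ∈ t, p b a) :
    ∑ a ∈ s, f a ≤ ∑ b ∈ t, ∑ a ∈ s.filter (p b), f a := by
  simp_rw [sum_filter]
  rw [sum_comm]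
  refine sum_le_sum fun a ha => ?_
  obtain ⟨b, hb, hpb⟩ := hcover a ha
  calc f a = if p b a then f a else 0 := (if_pos hpb).symm
    _ ≤ ∑ b ∈ t, if p b a then f a else 0 :=
      single_le_sum (f := fun b => if p b a then f a else 0)
        (fun b _ => by split_ifs <;> simp [hf a ha]) hb

-- Weighted Cauchy–Schwarz in the factors `i₁`, `i₂`.
lemma sum_mul_prod_le_of_sum_sq_le {ι κ : Type*} [Fintype ι] [DecidableEq ι] {S : Finset κ}
    {w : κ → ℝ} {a : ι → κ → ℝ} {A : ι → ℝ} {W s₁ s₂ : ℝ} {i₁ i₂ : ι}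
    (hw : ∀ P, 0 ≤ w P) (ha : ∀ i P, 0 ≤ a i P) (hA₀ : ∀ i, 0 ≤ A i)
    (hA : ∀ i, ∀ P ∈ S, a i P ≤ A i) (h : i₁ ≠ i₂) (hW : 0 ≤ W) (hs₁ : 0 ≤ s₁) (hs₂ : 0 ≤ s₂)
    (h₁ : ∑ P ∈ S, w P * a i₁ P ^ 2 ≤ W * s₁ ^ 2) (h₂ : ∑ P ∈ S, w P * a i₂ P ^ 2 ≤ W * s₂ ^ 2) :
    ∑ P ∈ S, w P * ∏ i, a i P ≤
      W * (s₁ * s₂ * ∏ i ∈ Finset.univ.filter (fun i => i ≠ i₁ ∧ i ≠ i₂), A i) := by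
  set B := ∏ i ∈ Finset.univ.filter (fun i => i ≠ i₁ ∧ i ≠ i₂), A i
  have hsqrt : ∀ P, √(w P * a i₁ P ^ 2) * √(w P * a i₂ P ^ 2) = w P * (a i₁ P * a i₂ P) :=
    fun P => by
      rw [Real.sqrt_mul (hw P), Real.sqrt_mul (hw P), Real.sqrt_sq (ha _ _),
        Real.sqrt_sq (ha _ _)]
      linear_combination (a i₁ P * a i₂ P) * Real.mul_self_sqrt (hw P)
  calc ∑ P ∈ S, w P * ∏ i, a i P
      ≤ ∑ P ∈ S, √(w P * a i₁ P ^ 2) * √(w P * a i₂ P ^ 2) * B := by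
        refine Finset.sum_le_sum fun P hP => ?_
        have hrest : ∏ i ∈ Finset.univ.filter (fun i => i ≠ i₁ ∧ i ≠ i₂), a i P ≤ B :=
          Finset.prod_le_prod (fun i _ => ha i P) (fun i _ => hA i P hP)
        rw [Finset.prod_eq_mul_mul_prod_filter_ne _ h, hsqrt, mul_assoc, mul_assoc]
        have := hw P; have := ha i₁ P; have := ha i₂ P
        gcongr
    _ = (∑ P ∈ S, √(w P * a i₁ P ^ 2) * √(w P * a i₂ P ^ 2)) * B := by rw [Finset.sum_mul]
    _ ≤ √(∑ P ∈ S, w P * a i₁ P ^ 2) * √(∑ P ∈ S, w P * a i₂ P ^ 2) * B := by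
        gcongr
        · exact Finset.prod_nonneg fun i _ => hA₀ i
        · exact Real.sum_sqrt_mul_sqrt_le S (fun P => by have := hw P; positivity)
            (fun P => by have := hw P; positivity)
    _ ≤ √(W * s₁ ^ 2) * √(W * s₂ ^ 2) * B := by
        gcongr
        exact Finset.prod_nonneg fun i _ => hA₀ i
    _ = W * (s₁ * s₂ * B) := by
        rw [Real.sqrt_mul hW, Real.sqrt_mul hW, Real.sqrt_sq hs₁, Real.sqrt_sq hs₂]
        linear_combination (s₁ * s₂ * B) * Real.mul_self_sqrt hW

lemma Int.mem_Icc_ceil_of_le_of_le_add {x c : ℝ} {k : ℤ} (h₁ : x ≤ k) (h₂ : (k : ℝ) ≤ x + c) :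
    k ∈ Finset.Icc ⌈x⌉ (⌈x⌉ + ⌈c⌉) := by
  refine Finset.mem_Icc.2 ⟨Int.ceil_le.2 h₁, ?_⟩
  exact_mod_cast h₂.trans (add_le_add (Int.le_ceil x) (Int.le_ceil c))

lemma Tile.kf_mem_Icc_of_subset_dil {β c : ℝ} {P P' : Tile}
    (h : (P.freqIv β).set ⊆ (P'.freqIv β).dil c) :
    P'.kf ∈ Finset.Icc ⌈(P.freqIv β).l / 2 ^ (-P'.j) - (-1) ^ (-P'.j) * β - 1 / 2 - c / 2⌉
      (⌈(P.freqIv β).l / 2 ^ (-P'.j) - (-1) ^ (-P'.j) * β - 1 / 2 - c / 2⌉ + ⌈c⌉) := by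
  set W := P.freqIv β
  have hlen : (0 : ℝ) < W.len := zpow_pos two_pos _
  have hL : (0 : ℝ) < 2 ^ (-P'.j) := zpow_pos two_pos _
  obtain ⟨h₁, h₂⟩ := (Set.Ioo_subset_Ioo_iff (by linarith)).1 h
  simp only [Tile.freqIv] at h₁ h₂
  apply Int.mem_Icc_ceil_of_le_of_le_add
  · have : W.l / 2 ^ (-P'.j) ≤ P'.kf + (-1) ^ (-P'.j) * β + 1 / 2 + c / 2 := by
      rw [div_le_iff₀ hL]; linarith
    linarith
  · have : P'.kf + (-1) ^ (-P'.j) * β + 1 / 2 - c / 2 ≤ W.l / 2 ^ (-P'.j) := by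
      rw [le_div_iff₀ hL]; linarith
    linarith

lemma MultiTile.j_le_of_timeIv_subset {n : ℕ} {P PT : MultiTile n}
    (h : P.timeIv.set ⊆ PT.timeIv.set) : P.j ≤ PT.j := by
  have hL : (0 : ℝ) < 2 ^ P.j := zpow_pos two_pos _
  obtain ⟨h₁, h₂⟩ := (Set.Ioo_subset_Ioo_iff (by simpa [MultiTile.timeIv] using hL)).1 h
  simp only [MultiTile.timeIv] at h₁ h₂
  exact (zpow_le_zpow_iff_right₀ (one_lt_two (α := ℝ))).1 (by linarith)

lemma MultiTile.kt_mem_Icc_of_timeIv_subset {n J : ℕ} {P PT : MultiTile n}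
    (hJ : PT.j - P.j ≤ J) (h : P.timeIv.set ⊆ PT.timeIv.set) :
    P.kt ∈ Finset.Icc ⌈(2 : ℝ) ^ PT.j * PT.kt / 2 ^ P.j⌉
      (⌈(2 : ℝ) ^ PT.j * PT.kt / 2 ^ P.j⌉ + 2 ^ J) := by
  have hL : (0 : ℝ) < 2 ^ P.j := zpow_pos two_pos _
  obtain ⟨h₁, h₂⟩ := (Set.Ioo_subset_Ioo_iff (by simpa [MultiTile.timeIv] using hL)).1 h
  simp only [MultiTile.timeIv] at h₁ h₂
  have hscale : (2 : ℝ) ^ PT.j / 2 ^ P.j ≤ 2 ^ J := by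
    rw [← zpow_sub₀ two_ne_zero, ← zpow_natCast]
    exact zpow_le_zpow_right₀ one_le_two hJ
  have hlow : (2 : ℝ) ^ PT.j * PT.kt / 2 ^ P.j ≤ P.kt := by rw [div_le_iff₀ hL]; linarith
  have hup : (P.kt : ℝ) + 1 ≤ 2 ^ PT.j * PT.kt / 2 ^ P.j + 2 ^ PT.j / 2 ^ P.j := by
    rw [← add_div, le_div_iff₀ hL]; linarith
  have hk := Int.mem_Icc_ceil_of_le_of_le_add (c := ((2 ^ J : ℤ) : ℝ)) hlow (by push_cast; linarith)
  rwa [Int.ceil_intCast] at hk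

lemma MultiTile.card_le_of_j_eq {n J : ℕ} {α : Fin n → ℝ} {c : ℝ} {S : Finset (MultiTile n)}
    {PT : MultiTile n} {j : ℤ} (hJ : PT.j - j ≤ J)
    (hS : ∀ P ∈ S, P.j = j ∧ P.timeIv.set ⊆ PT.timeIv.set ∧
      ∀ i, ((PT.tile i).freqIv (α i)).set ⊆ ((P.tile i).freqIv (α i)).dil c) :
    S.card ≤ (2 ^ J + 1) * (⌈c⌉ + 1).toNat ^ n := by
  set u : ℤ := ⌈(2 : ℝ) ^ PT.j * PT.kt / 2 ^ j⌉
  set lo : Fin n → ℤ := fun i =>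
    ⌈((PT.tile i).freqIv (α i)).l / 2 ^ (-j) - (-1) ^ (-j) * α i - 1 / 2 - c / 2⌉
  have hmaps : ∀ P ∈ S, (P.kt, P.kf) ∈
      Finset.Icc u (u + 2 ^ J) ×ˢ Fintype.piFinset fun i => Finset.Icc (lo i) (lo i + ⌈c⌉) := by
    intro P hP
    obtain ⟨rfl, htime, hfreq⟩ := hS P hP
    exact Finset.mem_product.2 ⟨MultiTile.kt_mem_Icc_of_timeIv_subset hJ htime,
      Fintype.mem_piFinset.2 fun i => by
        simpa only [MultiTile.tile, lo] using Tile.kf_mem_Icc_of_subset_dil (hfreq i)⟩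
  have hinj : Set.InjOn (fun P : MultiTile n => (P.kt, P.kf)) S := by
    intro P hP Q hQ hPQ
    obtain ⟨hkt, hkf⟩ := Prod.ext_iff.1 hPQ
    have hj : P.j = Q.j := (hS P hP).1.trans (hS Q hQ).1.symm
    rcases P with ⟨_, _, _⟩
    rcases Q with ⟨_, _, _⟩
    simp only at hj hkt hkf
    subst hj hkt hkf
    rfl
  calc S.card ≤ _ := Finset.card_le_card_of_injOn _ hmaps hinj
    _ = (2 ^ J + 1) * (⌈c⌉ + 1).toNat ^ n := by
      simp only [Finset.card_product, Fintype.card_piFinset, Int.card_Icc, add_assoc,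
        add_sub_cancel_left, Finset.prod_const, Finset.card_univ, Fintype.card_fin]
      norm_cast

lemma MultiTile.card_le_of_j_mem_Icc {n J : ℕ} {α : Fin n → ℝ} {c : ℝ}
    {S : Finset (MultiTile n)} {PT : MultiTile n}
    (hS : ∀ P ∈ S, P.j ∈ Finset.Icc (PT.j - J) PT.j ∧ P.timeIv.set ⊆ PT.timeIv.set ∧
      ∀ i, ((PT.tile i).freqIv (α i)).set ⊆ ((P.tile i).freqIv (α i)).dil c) :
    S.card ≤ (2 ^ J + 1) * (⌈c⌉ + 1).toNat ^ n * (J + 1) := by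
  calc S.card ≤ (2 ^ J + 1) * (⌈c⌉ + 1).toNat ^ n * (Finset.Icc (PT.j - J) PT.j).card :=
        Finset.card_le_mul_card_image_of_maps_to (fun P hP => (hS P hP).1) _ fun j hj =>
          MultiTile.card_le_of_j_eq (PT := PT) (j := j)
            (by have := Finset.mem_Icc.1 hj; omega) fun P hP => by
            obtain ⟨hPS, rfl⟩ := Finset.mem_filter.1 hP
            exact ⟨rfl, (hS P hPS).2⟩
    _ = _ := by rw [Int.card_Icc]; congr; omega

lemma tileNorm_nonneg (N : ℕ) (ψ : ℝ → ℂ) (P : Tile) (f : ℝ → ℂ) : 0 ≤ tileNorm N ψ P f := by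
  have hlen : (0 : ℝ) < P.timeIv.len := zpow_pos two_pos _
  refine mul_nonneg (by positivity) (integral_nonneg fun x => ?_)
  have : 0 ≤ P.timeIv.chi x :=
    inv_nonneg.2 (by have : 0 ≤ Metric.infDist x P.timeIv.set := Metric.infDist_nonneg; positivity)
  positivity

def pairSizeSup (n N : ℕ) (α : Fin n → ℝ) (c₃ : ℝ) (ψ : Fin n → Tile → ℝ → ℂ)
    (f : Fin n → ℝ → ℂ) (T : Finset (MultiTile n)) (PT : MultiTile n) : ℝ :=
  ⨆ (i₁ : Fin n) (i₂ : Fin n) (_ : i₁ < i₂),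
    treeSize n N α c₃ ψ i₁ (f i₁) T PT * treeSize n N α c₃ ψ i₂ (f i₂) T PT *
      ∏ i ∈ Finset.univ.filter (fun i : Fin n => i ≠ i₁ ∧ i ≠ i₂), treeNorm n N ψ i (f i) T

section Tree

variable {n N : ℕ} {α : Fin n → ℝ} {c₃ : ℝ} {ψ : Fin n → Tile → ℝ → ℂ}
  {T : Finset (MultiTile n)} {PT : MultiTile n}

lemma treeNorm_nonneg (i : Fin n) (g : ℝ → ℂ) : 0 ≤ treeNorm n N ψ i g T :=
  Real.iSup_nonneg fun _ => Real.iSup_nonneg fun _ => tileNorm_nonneg _ _ _ _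

lemma tileNorm_le_treeNorm (i : Fin n) (g : ℝ → ℂ) {P : MultiTile n} (hP : P ∈ T) :
    tileNorm N (ψ i (P.tile i)) (P.tile i) g ≤ treeNorm n N ψ i g T :=
  le_ciSup_finset T (fun P => tileNorm N (ψ i (P.tile i)) (P.tile i) g) hP

lemma treeNorm_le_treeSize (i : Fin n) (g : ℝ → ℂ) :
    treeNorm n N ψ i g T ≤ treeSize n N α c₃ ψ i g T PT :=
  le_add_of_nonneg_left (Real.sqrt_nonneg _)

lemma treeSize_nonneg (i : Fin n) (g : ℝ → ℂ) : 0 ≤ treeSize n N α c₃ ψ i g T PT :=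
  (treeNorm_nonneg i g).trans (treeNorm_le_treeSize i g)

lemma sum_sq_le_treeSize_sq_of_lesim' {i : Fin n} (g : ℝ → ℂ) {S : Finset (MultiTile n)}
    (hST : S ⊆ T) (hS : ∀ P ∈ S, Tile.lesim' (α i) c₃ (P.tile i) (PT.tile i)) :
    ∑ P ∈ S, (2 : ℝ) ^ P.j * tileNorm N (ψ i (P.tile i)) (P.tile i) g ^ 2 ≤
      2 ^ PT.j * treeSize n N α c₃ ψ i g T PT ^ 2 := by
  set Q := ∑ P ∈ T, if Tile.lesim' (α i) c₃ (P.tile i) (PT.tile i)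
    then (2 : ℝ) ^ P.j * tileNorm N (ψ i (P.tile i)) (P.tile i) g ^ 2 else 0
  have hQ : 0 ≤ Q := Finset.sum_nonneg fun P _ => by positivity
  have hPT : (0 : ℝ) < 2 ^ PT.j := zpow_pos two_pos _
  calc ∑ P ∈ S, (2 : ℝ) ^ P.j * tileNorm N (ψ i (P.tile i)) (P.tile i) g ^ 2
      = ∑ P ∈ S, if Tile.lesim' (α i) c₃ (P.tile i) (PT.tile i)
          then (2 : ℝ) ^ P.j * tileNorm N (ψ i (P.tile i)) (P.tile i) g ^ 2 else 0 :=
        Finset.sum_congr rfl fun P hP => (if_pos (hS P hP)).symm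
    _ ≤ Q := Finset.sum_le_sum_of_subset_of_nonneg hST fun P _ _ => by positivity
    _ = 2 ^ PT.j * √((2 ^ PT.j)⁻¹ * Q) ^ 2 := by
        rw [Real.sq_sqrt (by positivity), mul_inv_cancel_left₀ hPT.ne']
    _ ≤ 2 ^ PT.j * treeSize n N α c₃ ψ i g T PT ^ 2 := by
        gcongr
        exact le_add_of_nonneg_right (treeNorm_nonneg i g)

variable (f : Fin n → ℝ → ℂ)

lemma le_pairSizeSup {i₁ i₂ : Fin n} (h : i₁ < i₂) :
    treeSize n N α c₃ ψ i₁ (f i₁) T PT * treeSize n N α c₃ ψ i₂ (f i₂) T PT *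
        ∏ i ∈ Finset.univ.filter (fun i : Fin n => i ≠ i₁ ∧ i ≠ i₂), treeNorm n N ψ i (f i) T ≤
      pairSizeSup n N α c₃ ψ f T PT :=
  le_ciSup_of_lt (fun i₁ i₂ => treeSize n N α c₃ ψ i₁ (f i₁) T PT *
    treeSize n N α c₃ ψ i₂ (f i₂) T PT *
      ∏ i ∈ Finset.univ.filter (fun i : Fin n => i ≠ i₁ ∧ i ≠ i₂), treeNorm n N ψ i (f i) T) h

lemma prod_tileNorm_le_pairSizeSup (hn : 2 ≤ n) {P : MultiTile n} (hP : P ∈ T) :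
    ∏ i, tileNorm N (ψ i (P.tile i)) (P.tile i) (f i) ≤ pairSizeSup n N α c₃ ψ f T PT := by
  have h01 : (⟨0, by omega⟩ : Fin n) < ⟨1, by omega⟩ := Fin.mk_lt_mk.2 zero_lt_one
  refine le_trans ?_ (le_pairSizeSup f h01)
  rw [Finset.prod_eq_mul_mul_prod_filter_ne _ h01.ne, mul_assoc]
  have hnorm : ∀ i, 0 ≤ tileNorm N (ψ i (P.tile i)) (P.tile i) (f i) := fun i =>
    tileNorm_nonneg _ _ _ _
  have hle : ∀ i, tileNorm N (ψ i (P.tile i)) (P.tile i) (f i) ≤ treeNorm n N ψ i (f i) T :=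
    fun i => tileNorm_le_treeNorm i (f i) hP
  exact mul_le_mul ((hle _).trans (treeNorm_le_treeSize _ _))
    (mul_le_mul ((hle _).trans (treeNorm_le_treeSize _ _))
      (Finset.prod_le_prod (fun i _ => hnorm i) fun i _ => hle i)
      (Finset.prod_nonneg fun i _ => hnorm i) (treeSize_nonneg _ _))
    (mul_nonneg (hnorm _) (Finset.prod_nonneg fun i _ => hnorm i)) (treeSize_nonneg _ _)

lemma sum_le_pairSizeSup_of_lesim' {S : Finset (MultiTile n)} (hST : S ⊆ T) {i₁ i₂ : Fin n}
    (h : i₁ < i₂) (hS : ∀ P ∈ S, Tile.lesim' (α i₁) c₃ (P.tile i₁) (PT.tile i₁) ∧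
      Tile.lesim' (α i₂) c₃ (P.tile i₂) (PT.tile i₂)) :
    ∑ P ∈ S, (2 : ℝ) ^ P.j * ∏ i, tileNorm N (ψ i (P.tile i)) (P.tile i) (f i) ≤
      2 ^ PT.j * pairSizeSup n N α c₃ ψ f T PT :=
  (sum_mul_prod_le_of_sum_sq_le (fun _ => (zpow_pos two_pos _).le)
    (fun _ _ => tileNorm_nonneg _ _ _ _) (fun i => treeNorm_nonneg i (f i))
    (fun i _ hP => tileNorm_le_treeNorm i (f i) (hST hP)) h.ne (zpow_pos two_pos _).le
    (treeSize_nonneg _ _) (treeSize_nonneg _ _)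
    (sum_sq_le_treeSize_sq_of_lesim' _ hST fun P hP => (hS P hP).1)
    (sum_sq_le_treeSize_sq_of_lesim' _ hST fun P hP => (hS P hP).2)).trans <|
  mul_le_mul_of_nonneg_left (le_pairSizeSup f h) (zpow_pos two_pos _).le

lemma pairSizeSup_nonneg (hn : 2 ≤ n) : 0 ≤ pairSizeSup n N α c₃ ψ f T PT := by
  have h01 : (⟨0, by omega⟩ : Fin n) < ⟨1, by omega⟩ := Fin.mk_lt_mk.2 zero_lt_one
  refine le_trans ?_ (le_pairSizeSup f h01)
  exact mul_nonneg (mul_nonneg (treeSize_nonneg _ _) (treeSize_nonneg _ _))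
    (Finset.prod_nonneg fun i _ => treeNorm_nonneg i (f i))

lemma sum_le_of_exists_lesim'_pair (hn : 2 ≤ n) {S : Finset (MultiTile n)} (hST : S ⊆ T)
    (hS : ∀ P ∈ S, ∃ i i', i ≠ i' ∧ Tile.lesim' (α i) c₃ (P.tile i) (PT.tile i) ∧
      Tile.lesim' (α i') c₃ (P.tile i') (PT.tile i')) :
    ∑ P ∈ S, (2 : ℝ) ^ P.j * ∏ i, tileNorm N (ψ i (P.tile i)) (P.tile i) (f i) ≤
      (n * n : ℕ) * (2 ^ PT.j * pairSizeSup n N α c₃ ψ f T PT) := by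
  set pairs := (Finset.univ : Finset (Fin n × Fin n)).filter fun q => q.1 < q.2
  have hcover : ∀ P ∈ S, ∃ q ∈ pairs, Tile.lesim' (α q.1) c₃ (P.tile q.1) (PT.tile q.1) ∧
      Tile.lesim' (α q.2) c₃ (P.tile q.2) (PT.tile q.2) := by
    intro P hP
    obtain ⟨i, i', hne, hi, hi'⟩ := hS P hP
    rcases hne.lt_or_gt with h | h
    · exact ⟨(i, i'), Finset.mem_filter.2 ⟨Finset.mem_univ _, h⟩, hi, hi'⟩
    · exact ⟨(i', i), Finset.mem_filter.2 ⟨Finset.mem_univ _, h⟩, hi', hi⟩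
  have hpairs : pairs.card ≤ n * n :=
    (Finset.card_filter_le _ _).trans (by simp)
  calc ∑ P ∈ S, (2 : ℝ) ^ P.j * ∏ i, tileNorm N (ψ i (P.tile i)) (P.tile i) (f i)
      ≤ ∑ q ∈ pairs, ∑ P ∈ S.filter (fun P => Tile.lesim' (α q.1) c₃ (P.tile q.1) (PT.tile q.1) ∧
          Tile.lesim' (α q.2) c₃ (P.tile q.2) (PT.tile q.2)),
            (2 : ℝ) ^ P.j * ∏ i, tileNorm N (ψ i (P.tile i)) (P.tile i) (f i) :=
        Finset.sum_le_sum_sum_filter_of_forall_exists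
          (fun P _ => mul_nonneg (zpow_pos two_pos _).le
            (Finset.prod_nonneg fun i _ => tileNorm_nonneg _ _ _ _)) hcover
    _ ≤ pairs.card • (2 ^ PT.j * pairSizeSup n N α c₃ ψ f T PT) :=
        Finset.sum_le_card_nsmul _ _ _ fun q hq =>
          sum_le_pairSizeSup_of_lesim' f ((Finset.filter_subset _ _).trans hST)
            (Finset.mem_filter.1 hq).2 fun P hP => (Finset.mem_filter.1 hP).2
    _ ≤ (n * n : ℕ) * (2 ^ PT.j * pairSizeSup n N α c₃ ψ f T PT) := by
        rw [nsmul_eq_mul]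
        gcongr
        exact mul_nonneg (zpow_pos two_pos _).le (pairSizeSup_nonneg f hn)

lemma sum_le_card_mul_pairSizeSup (hn : 2 ≤ n) {S : Finset (MultiTile n)} (hST : S ⊆ T)
    (hS : ∀ P ∈ S, P.j ≤ PT.j) {K : ℕ} (hcard : S.card ≤ K) :
    ∑ P ∈ S, (2 : ℝ) ^ P.j * ∏ i, tileNorm N (ψ i (P.tile i)) (P.tile i) (f i) ≤
      K * (2 ^ PT.j * pairSizeSup n N α c₃ ψ f T PT) := by
  have hG : 0 ≤ pairSizeSup n N α c₃ ψ f T PT := pairSizeSup_nonneg f hn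
  calc ∑ P ∈ S, (2 : ℝ) ^ P.j * ∏ i, tileNorm N (ψ i (P.tile i)) (P.tile i) (f i)
      ≤ S.card • (2 ^ PT.j * pairSizeSup n N α c₃ ψ f T PT) :=
        Finset.sum_le_card_nsmul _ _ _ fun P hP =>
          mul_le_mul (zpow_le_zpow_right₀ one_le_two (hS P hP))
            (prod_tileNorm_le_pairSizeSup f hn (hST hP))
            (Finset.prod_nonneg fun i _ => tileNorm_nonneg _ _ _ _) (zpow_pos two_pos _).le
    _ ≤ K * (2 ^ PT.j * pairSizeSup n N α c₃ ψ f T PT) := by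
        rw [nsmul_eq_mul]
        gcongr

end Tree

lemma IsTree.lesim_of_hasRank {n : ℕ} {α : Fin n → ℝ} {c₃ csmall : ℝ}
    {Ps T : Finset (MultiTile n)} {PT : MultiTile n} {jdx : Fin n}
    (htree : IsTree n α Ps T PT jdx) (hrank : HasRank n 1 α c₃ csmall Ps) {P : MultiTile n}
    (hP : P ∈ T) :
    (∀ i, Tile.lesim (α i) c₃ (P.tile i) (PT.tile i)) ∧
      ((2 : ℝ) ^ P.j ≤ csmall * 2 ^ PT.j → ∃ i i', i ≠ i' ∧
        Tile.lesim' (α i) c₃ (P.tile i) (PT.tile i) ∧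
          Tile.lesim' (α i') c₃ (P.tile i') (PT.tile i')) :=
  hrank PT htree.1 P (htree.2.1 hP) (fun _ => jdx) (Subsingleton.strictMono _)
    fun _ => htree.2.2 P hP

lemma card_filter_scale_gt_le {n J : ℕ} {α : Fin n → ℝ} {c₃ csmall : ℝ}
    {T : Finset (MultiTile n)} {PT : MultiTile n} (hJ : (1 / 2 : ℝ) ^ J < csmall)
    (hdom : ∀ P ∈ T, ∀ i, Tile.lesim (α i) c₃ (P.tile i) (PT.tile i)) (i₀ : Fin n) :
    (T.filter fun P => ¬ (2 : ℝ) ^ P.j ≤ csmall * 2 ^ PT.j).card ≤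
      (2 ^ J + 1) * (⌈c₃⌉ + 1).toNat ^ n * (J + 1) := by
  refine MultiTile.card_le_of_j_mem_Icc (α := α) (PT := PT) fun P hP => ?_
  obtain ⟨hPT, hlarge⟩ := Finset.mem_filter.1 hP
  have htime : P.timeIv.set ⊆ PT.timeIv.set := (hdom P hPT i₀).1
  have hscale : (2 : ℝ) ^ (PT.j - J) < 2 ^ P.j :=
    calc (2 : ℝ) ^ (PT.j - J) = (1 / 2) ^ J * 2 ^ PT.j := by
          rw [zpow_sub₀ two_ne_zero, zpow_natCast, one_div, inv_pow, div_eq_inv_mul]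
      _ < csmall * 2 ^ PT.j := by gcongr
      _ < 2 ^ P.j := not_le.1 hlarge
  have hj := (zpow_lt_zpow_iff_right₀ (one_lt_two (α := ℝ))).1 hscale
  exact ⟨Finset.mem_Icc.2 ⟨hj.le, MultiTile.j_le_of_timeIv_subset htime⟩, htime,
    fun i => (hdom P hPT i).2⟩

theorem statement14_general (n : ℕ) (hn : 2 ≤ n) (N : ℕ)
    (α : Fin n → ℝ)
    (Ca : ℕ → ℝ) (c₃ csmall : ℝ) (hcs : 0 < csmall) :
    ∃ (M : ℕ) (C : ℝ),
      ∀ ψ : Fin n → Tile → ℝ → ℂ,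
        (∀ i P, AdaptedBump (Tile.freqIv (α i) P) Ca M (ψ i P)) →
        ∀ (f : Fin n → ℝ → ℂ) (Ps : Finset (MultiTile n)),
          HasRank n 1 α c₃ csmall Ps →
          ∀ (T : Finset (MultiTile n)) (PT : MultiTile n) (jdx : Fin n),
            IsTree n α Ps T PT jdx →
            (∑ P ∈ T, (2:ℝ) ^ P.j *
                ∏ i, tileNorm N (ψ i (MultiTile.tile P i)) (MultiTile.tile P i) (f i)) ≤
              C * (2:ℝ) ^ PT.j *
                ⨆ (i₁ : Fin n) (i₂ : Fin n) (_ : i₁ < i₂),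
                  treeSize n N α c₃ ψ i₁ (f i₁) T PT * treeSize n N α c₃ ψ i₂ (f i₂) T PT *
                    ∏ i ∈ Finset.univ.filter (fun i : Fin n => i ≠ i₁ ∧ i ≠ i₂),
                      treeNorm n N ψ i (f i) T := by
  obtain ⟨J, hJ⟩ := exists_pow_lt_of_lt_one hcs (by norm_num : (1 / 2 : ℝ) < 1)
  refine ⟨0, (n * n + (2 ^ J + 1) * (⌈c₃⌉ + 1).toNat ^ n * (J + 1) : ℕ), ?_⟩
  intro ψ _ f Ps hrank T PT jdx htree
  have hdom := fun P (hP : P ∈ T) => (htree.lesim_of_hasRank hrank hP).1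
  have hpair := fun P (hP : P ∈ T) => (htree.lesim_of_hasRank hrank hP).2
  show _ ≤ _ * _ * pairSizeSup n N α c₃ ψ f T PT
  rw [← Finset.sum_filter_add_sum_filter_not T fun P => (2 : ℝ) ^ P.j ≤ csmall * 2 ^ PT.j]
  calc _ ≤ (n * n : ℕ) * (2 ^ PT.j * pairSizeSup n N α c₃ ψ f T PT) +
        ((2 ^ J + 1) * (⌈c₃⌉ + 1).toNat ^ n * (J + 1) : ℕ) *
          (2 ^ PT.j * pairSizeSup n N α c₃ ψ f T PT) :=
        add_le_add
          (sum_le_of_exists_lesim'_pair f hn (Finset.filter_subset _ _) fun P hP =>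
            hpair P (Finset.mem_filter.1 hP).1 (Finset.mem_filter.1 hP).2)
          (sum_le_card_mul_pairSizeSup f hn (Finset.filter_subset _ _)
            (fun P hP => MultiTile.j_le_of_timeIv_subset (hdom P (Finset.mem_filter.1 hP).1 jdx).1)
            (card_filter_scale_gt_le hJ hdom jdx))
    _ = _ := by push_cast; ring

/-- Lemma 7.3 (`Cauchy-Schwarz`): the estimate for a single tree in terms of two
sizes and the remaining sup norms. -/
theorem statement14 (n : ℕ) (hn : 2 ≤ n) (N : ℕ)
    (α : Fin n → ℝ) (hα : ∀ i, α i = 0 ∨ α i = 1/3 ∨ α i = 2/3)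
    (Ca : ℕ → ℝ) (c₃ csmall : ℝ) (hc₃ : 0 < c₃) (hcs : 0 < csmall) :
    ∃ (M : ℕ) (C : ℝ),
      ∀ ψ : Fin n → Tile → ℝ → ℂ,
        (∀ i P, AdaptedBump (Tile.freqIv (α i) P) Ca M (ψ i P)) →
        ∀ (f : Fin n → ℝ → ℂ) (Ps : Finset (MultiTile n)),
          HasRank n 1 α c₃ csmall Ps →
          ∀ (T : Finset (MultiTile n)) (PT : MultiTile n) (jdx : Fin n),
            IsTree n α Ps T PT jdx →
            (∑ P ∈ T, (2:ℝ) ^ P.j *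
                ∏ i, tileNorm N (ψ i (MultiTile.tile P i)) (MultiTile.tile P i) (f i)) ≤
              C * (2:ℝ) ^ PT.j *
                ⨆ (i₁ : Fin n) (i₂ : Fin n) (_ : i₁ < i₂),
                  treeSize n N α c₃ ψ i₁ (f i₁) T PT * treeSize n N α c₃ ψ i₂ (f i₂) T PT *
                    ∏ i ∈ Finset.univ.filter (fun i : Fin n => i ≠ i₁ ∧ i ≠ i₂),
                      treeNorm n N ψ i (f i) T :=
  statement14_general n hn N α Ca c₃ csmall hcs
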